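/- arXiv:1907.09185 — 2 statements merged into one kernel-verified Lean document; each statement's English description precedes it below -/
import Mathlib

section
/- Let m ∈ ℕ with m ≥ 2, let a : ℤ → ℝ be a finitely supported mask, and let φ : ℝ → ℝ be a continuous, compactly supported function satisfying φ(x) = Σ_{k∈ℤ} a_k φ(mx − k + 1/2) for all x ∈ ℝ, with |φ(x)| + |φ̂(x)| ≤ C(1 + |x|)^{−1−ε} for some C, ε > 0, and satisfying the interpolation condition φ(n) = δ_{0,n} for all n ∈ ℤ. Then for every ω ∈ ℝ, writing z = e^{−πiω}, the following identity holds: 1/2 + Σ_{γ=0}^{m−1} Φ_{2,2γ+1}(z^m) = m z^{−1} ( Σ_{β=0,…,m−1 with 2β ≡ 1 (mod m)} A_β(z²)/2 + Σ_{β,γ=0,…,m−1 with 2(γ+β) ≡ 0 (mod m)} A_β(z²) Φ_{2,2γ+1}(z) ). -/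
/-!
Put `c n = φ (n / 2)`. Interpolation gives `c (2q) = δ_{q,0}`, and the refinement equation at
`x = p / 2` gives `c p = Σ_k a_k c (mp - 2k + 1)`. Both sides of the identity then equal
`½ Σ_k a_k z^(2k-1) ([m ∣ 2k - 1] + Σ_r [m ∣ 2(k + r)] c (2r + 1) z^(2r + 1))`. On the left,
`½ + Σ_γ Φ_{2,2γ+1}(z^m) = ½ Σ_p c p z^(mp)`; substitute the refinement relation and split
`n = mp - 2k + 1` by parity. On the right, the sub-symbols `A_β` and `Φ_{2,2γ+1}` merely sort
`k` and `r` into residue classes mod `m`. Compact support of `φ` makes every sum finite.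
-/

/-- The Fourier transform `φ̂(ω) = ∫ φ(x) e^{-2πixω} dx`. -/
noncomputable def fourierT (φ : ℝ → ℝ) (ω : ℝ) : ℂ :=
  ∫ x : ℝ, (φ x : ℂ) * Complex.exp (-(2 * (Real.pi : ℂ) * Complex.I * (x : ℂ) * (ω : ℂ)))

/-- The Laurent polynomial `Φ_{T,n}(z) = (1/T) Σ_k φ(mk + n/T) z^(mTk+n)`. -/
noncomputable def PhiSub (φ : ℝ → ℝ) (m T : ℕ) (n : ℤ) (z : ℂ) : ℂ :=
  (T : ℂ)⁻¹ * ∑ᶠ k : ℤ, (φ ((m : ℝ) * (k : ℝ) + (n : ℝ) / (T : ℝ)) : ℂ) * z ^ ((m : ℤ) * (T : ℤ) * k + n)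

/-- The sub-symbol `A_n(z) = (1/m) Σ_k a_{mk+n} z^(mk+n)` of the mask `a`. -/
noncomputable def ASub (a : ℤ → ℝ) (m : ℕ) (n : ℤ) (z : ℂ) : ℂ :=
  (m : ℂ)⁻¹ * ∑ᶠ k : ℤ, (a ((m : ℤ) * k + n) : ℂ) * z ^ ((m : ℤ) * k + n)

open Function Finset

section Residues

variable {M : Type*} [AddCommMonoid M]

theorem finsum_eq_sum_range_finsum_mul_add {m : ℕ} (hm : 0 < m) {f : ℤ → M}
    (hf : HasFiniteSupport f) :
    ∑ᶠ n, f n = ∑ γ ∈ range m, ∑ᶠ q : ℤ, f (m * q + γ) := by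
  have := NeZero.of_pos hm
  let e := (Int.divModEquiv m).symm
  rw [← finsum_comp_equiv e, finsum_curry (fun p => f (e p)) (hf.comp_of_injective e.injective)]
  simp only [e, Int.divModEquiv_symm_apply, finsum_eq_sum_of_fintype]
  rw [finsum_sum_comm _ (fun q (γ : Fin m) => f (q * m + γ)) fun γ _ =>
    hf.fun_comp_of_injective fun q₁ q₂ h => by simpa [hm.ne'] using h]
  simp_rw [mul_comm _ (m : ℤ)]
  exact Fin.sum_univ_eq_sum_range (fun γ => ∑ᶠ q : ℤ, f (m * q + γ)) m

theorem finsum_eq_finsum_even_add_finsum_odd {f : ℤ → M} (hf : HasFiniteSupport f) :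
    ∑ᶠ n, f n = ∑ᶠ q, f (2 * q) + ∑ᶠ q, f (2 * q + 1) := by
  rw [finsum_eq_sum_range_finsum_mul_add two_pos hf, show range 2 = {0, 1} from rfl]
  simp

theorem finsum_comp_mul_add {m : ℤ} (hm : m ≠ 0) (f : ℤ → M) (d : ℤ) :
    ∑ᶠ p, f (m * p + d) = ∑ᶠ n, if m ∣ n - d then f n else 0 := by
  have hrange : Set.range (fun p => m * p + d) = {n | m ∣ n - d} := by
    ext n
    exact ⟨fun ⟨p, hp⟩ => ⟨p, by linarith⟩, fun ⟨p, hp⟩ => ⟨p, by linarith⟩⟩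
  rw [← finsum_mem_range (f := f) fun p q h => by simpa [hm] using h, hrange, finsum_mem_def]
  exact finsum_congr fun n => by simp [Set.indicator]

@[fun_prop]
theorem Function.HasFiniteSupport.ite_zero {α : Type*} {f : α → M} (hf : HasFiniteSupport f)
    (p : α → Prop) [DecidablePred p] : HasFiniteSupport fun x => if p x then f x else 0 :=
  hf.subset fun x hx => by by_cases h : p x <;> simp_all

end Residues

@[fun_prop]
theorem Function.HasFiniteSupport.ofReal_comp {α : Type*} {f : α → ℝ} (hf : HasFiniteSupport f) :
    HasFiniteSupport fun x => (f x : ℂ) :=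
  hf.fun_comp Complex.ofReal_zero

theorem two_mul_mod_eq_one_mod_iff_dvd (m β : ℕ) (q : ℤ) :
    2 * β % m = 1 % m ↔ (m : ℤ) ∣ 2 * (m * q + β) - 1 := by
  rw [show 2 * ((m : ℤ) * q + β) - 1 = m * (2 * q) + (2 * β - 1) by ring,
    dvd_add_right (dvd_mul_right _ _), ← dvd_neg, neg_sub]
  exact_mod_cast Nat.modEq_iff_dvd

theorem two_mul_add_mod_eq_zero_iff_dvd (m β γ : ℕ) (q l : ℤ) :
    2 * (γ + β) % m = 0 ↔ (m : ℤ) ∣ 2 * ((m * q + β) + (m * l + γ)) := by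
  rw [show 2 * (((m : ℤ) * q + β) + (m * l + γ)) = m * (2 * (q + l)) + ((2 * (γ + β) : ℕ) : ℤ) by
    push_cast; ring, dvd_add_right (dvd_mul_right _ _), Int.natCast_dvd_natCast,
    Nat.dvd_iff_mod_eq_zero]

noncomputable def halfSamples (φ : ℝ → ℝ) (n : ℤ) : ℂ := φ (n / 2)

noncomputable def oddResidueSeries (φ : ℝ → ℝ) (m : ℕ) (k : ℤ) (z : ℂ) : ℂ :=
  ∑ᶠ r : ℤ, if (m : ℤ) ∣ 2 * (k + r) then halfSamples φ (2 * r + 1) * z ^ (2 * r + 1) else 0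

section DualRefinement

variable {φ : ℝ → ℝ} {m : ℕ} {a : ℤ → ℝ}

theorem hasFiniteSupport_halfSamples (hφ : HasCompactSupport φ) :
    HasFiniteSupport (halfSamples φ) := by
  have hK : IsCompact ((2 * ·) '' tsupport φ) :=
    hφ.isCompact.image (continuous_const.mul continuous_id)
  refine (Filter.mem_cofinite.mp (Int.tendsto_coe_cofinite hK.compl_mem_cocompact)).subset
    fun n hn => ?_
  have hn : φ (n / 2) ≠ 0 := fun h => hn (by simp [halfSamples, h])
  simpa using ⟨(n : ℝ) / 2, subset_tsupport φ hn, by ring⟩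

theorem halfSamples_two_mul (hint : ∀ n : ℤ, φ n = if n = 0 then 1 else 0) (q : ℤ) :
    halfSamples φ (2 * q) = if q = 0 then 1 else 0 := by
  simp [halfSamples, hint, apply_ite]

theorem halfSamples_eq_finsum
    (href : ∀ x : ℝ, φ x = ∑ᶠ k : ℤ, a k * φ ((m : ℝ) * x - (k : ℝ) + 1 / 2)) (p : ℤ) :
    halfSamples φ p = ∑ᶠ k, (a k : ℂ) * halfSamples φ (m * p - 2 * k + 1) := by
  rw [halfSamples, href]
  refine (Complex.ofRealHom.toAddMonoidHom.map_finsum_of_injective Complex.ofReal_injective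
    _).trans (finsum_congr fun k => ?_)
  simp only [halfSamples, RingHom.toAddMonoidHom_eq_coe, AddMonoidHom.coe_coe,
    Complex.ofRealHom_eq_coe, Complex.ofReal_mul]
  push_cast
  ring_nf

theorem PhiSub_two_odd_eq_finsum (γ : ℤ) (y : ℂ) :
    PhiSub φ m 2 (2 * γ + 1) y =
      2⁻¹ * ∑ᶠ k : ℤ, halfSamples φ (2 * (m * k + γ) + 1) * y ^ (2 * (m * k + γ) + 1) := by
  simp only [PhiSub, halfSamples]
  push_cast
  ring_nf

theorem ASub_sq_eq_finsum (β : ℤ) (z : ℂ) :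
    ASub a m β (z ^ 2) = (m : ℂ)⁻¹ * ∑ᶠ q : ℤ, (a (m * q + β) : ℂ) * z ^ (2 * (m * q + β)) := by
  simp only [ASub, ← zpow_natCast, ← zpow_mul]
  push_cast
  ring_nf

theorem one_half_add_sum_PhiSub (hc : HasFiniteSupport (halfSamples φ))
    (heven : ∀ q : ℤ, halfSamples φ (2 * q) = if q = 0 then 1 else 0) (hm : 0 < m) (w : ℂ) :
    1 / 2 + ∑ γ ∈ range m, PhiSub φ m 2 (2 * γ + 1) w =
      2⁻¹ * ∑ᶠ p : ℤ, halfSamples φ p * w ^ p := by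
  have hodd : HasFiniteSupport fun r : ℤ => halfSamples φ (2 * r + 1) * w ^ (2 * r + 1) :=
    (hc.fun_comp_of_injective fun r s h => by simpa using h).mul_left _
  have hhalf : (1 / 2 : ℂ) = 2⁻¹ * ∑ᶠ q : ℤ, halfSamples φ (2 * q) * w ^ (2 * q) := by
    rw [finsum_eq_single _ 0 fun q hq => by simp [heven, hq]]
    simpa using heven 0
  simp only [PhiSub_two_odd_eq_finsum]
  rw [hhalf, ← mul_sum, ← finsum_eq_sum_range_finsum_mul_add hm hodd, ← mul_add]
  exact congrArg _ (finsum_eq_finsum_even_add_finsum_odd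
    (f := fun p => halfSamples φ p * w ^ p) (by fun_prop)).symm

theorem finsum_halfSamples_residue_class (hc : HasFiniteSupport (halfSamples φ))
    (heven : ∀ q : ℤ, halfSamples φ (2 * q) = if q = 0 then 1 else 0) (hm : 0 < m) (k : ℤ)
    (z : ℂ) :
    ∑ᶠ p : ℤ, halfSamples φ (m * p - 2 * k + 1) * z ^ (m * p - 2 * k + 1) =
      (if (m : ℤ) ∣ 2 * k - 1 then 1 else 0) + oddResidueSeries φ m k z := by
  have hm' : (m : ℤ) ≠ 0 := by exact_mod_cast hm.ne'
  calc ∑ᶠ p : ℤ, halfSamples φ (m * p - 2 * k + 1) * z ^ (m * p - 2 * k + 1)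
      = ∑ᶠ p : ℤ, halfSamples φ (m * p + (1 - 2 * k)) * z ^ (m * p + (1 - 2 * k)) := by
        simp only [add_sub, sub_add_eq_add_sub]
    _ = ∑ᶠ n : ℤ, if (m : ℤ) ∣ n - (1 - 2 * k) then halfSamples φ n * z ^ n else 0 :=
        finsum_comp_mul_add hm' (fun n => halfSamples φ n * z ^ n) _
    _ = (∑ᶠ q : ℤ, if (m : ℤ) ∣ 2 * q - (1 - 2 * k) then halfSamples φ (2 * q) * z ^ (2 * q) else 0)
        + ∑ᶠ r : ℤ, if (m : ℤ) ∣ 2 * r + 1 - (1 - 2 * k)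
            then halfSamples φ (2 * r + 1) * z ^ (2 * r + 1) else 0 :=
        finsum_eq_finsum_even_add_finsum_odd (by fun_prop)
    _ = _ := by
      congr 1
      · rw [finsum_eq_single _ 0 fun q hq => by simp [heven, hq]]
        simp [(by simpa using heven 0 : halfSamples φ 0 = 1), sub_eq_add_neg, add_comm]
      · refine finsum_congr fun r => ?_
        rw [show 2 * r + 1 - (1 - 2 * k) = 2 * (k + r) by ring]

theorem finsum_halfSamples_refinement (hc : HasFiniteSupport (halfSamples φ))
    (ha : HasFiniteSupport a)
    (hrefine : ∀ p : ℤ, halfSamples φ p = ∑ᶠ k, (a k : ℂ) * halfSamples φ (m * p - 2 * k + 1))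
    (hm : 0 < m) {z : ℂ} (hz : z ≠ 0) :
    ∑ᶠ p : ℤ, halfSamples φ p * (z ^ m) ^ p =
      ∑ᶠ k : ℤ, (a k : ℂ) * z ^ (2 * k - 1) *
        ∑ᶠ p : ℤ, halfSamples φ (m * p - 2 * k + 1) * z ^ (m * p - 2 * k + 1) := by
  have hS : ∀ F : ℤ → ℂ, (∀ k, a k = 0 → F k = 0) → support F ⊆ ha.toFinset :=
    fun F hF k hk => ha.mem_toFinset.2 fun h => hk (hF k h)
  calc ∑ᶠ p : ℤ, halfSamples φ p * (z ^ m) ^ p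
      = ∑ᶠ p : ℤ, ∑ k ∈ ha.toFinset, (a k : ℂ) * z ^ (2 * k - 1) *
          (halfSamples φ (m * p - 2 * k + 1) * z ^ (m * p - 2 * k + 1)) :=
        finsum_congr fun p => by
          rw [hrefine p, finsum_eq_sum_of_support_subset _ (hS _ fun k h => by simp [h]), sum_mul]
          refine sum_congr rfl fun k _ => ?_
          rw [← zpow_natCast, ← zpow_mul, mul_mul_mul_comm, ← zpow_add₀ hz]
          ring_nf
    _ = ∑ k ∈ ha.toFinset, ∑ᶠ p : ℤ, (a k : ℂ) * z ^ (2 * k - 1) *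
          (halfSamples φ (m * p - 2 * k + 1) * z ^ (m * p - 2 * k + 1)) := by
        refine finsum_sum_comm _ _ fun k _ => .mul_right _ <| .mul_left ?_ _
        exact hc.fun_comp_of_injective fun p q h => by simpa [hm.ne'] using h
    _ = _ := by
        simp_rw [mul_finsum]
        exact (finsum_eq_sum_of_support_subset _ (hS _ fun k h => by simp [h])).symm

theorem sum_filter_ASub_div_two (ha : HasFiniteSupport a) (hm : 0 < m) (z : ℂ) :
    ∑ β ∈ (range m).filter (fun β => 2 * β % m = 1 % m), ASub a m β (z ^ 2) / 2 =
      (2 * m : ℂ)⁻¹ * ∑ᶠ k : ℤ, (a k : ℂ) * z ^ (2 * k) * if (m : ℤ) ∣ 2 * k - 1 then 1 else 0 := by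
  rw [finsum_eq_sum_range_finsum_mul_add hm (by fun_prop), mul_sum, sum_filter]
  refine sum_congr rfl fun β _ => ?_
  rw [ASub_sq_eq_finsum]
  split_ifs with hβ
  · simp only [(two_mul_mod_eq_one_mod_iff_dvd m β _).1 hβ, if_true, mul_one]
    ring
  · simp [← two_mul_mod_eq_one_mod_iff_dvd m β, hβ]

theorem sum_filter_PhiSub (hc : HasFiniteSupport (halfSamples φ)) (hm : 0 < m) (β : ℕ) (q : ℤ)
    (z : ℂ) :
    ∑ γ ∈ (range m).filter (fun γ => 2 * (γ + β) % m = 0), PhiSub φ m 2 (2 * γ + 1) z =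
      2⁻¹ * oddResidueSeries φ m (m * q + β) z := by
  have hodd : HasFiniteSupport fun r : ℤ => halfSamples φ (2 * r + 1) * z ^ (2 * r + 1) :=
    (hc.fun_comp_of_injective fun r s h => by simpa using h).mul_left _
  rw [oddResidueSeries, finsum_eq_sum_range_finsum_mul_add hm (by fun_prop), mul_sum, sum_filter]
  refine sum_congr rfl fun γ _ => ?_
  rw [PhiSub_two_odd_eq_finsum]
  split_ifs with hγ
  · simp only [(two_mul_add_mod_eq_zero_iff_dvd m β γ q _).1 hγ, if_true]
  · simp [← two_mul_add_mod_eq_zero_iff_dvd m β γ q, hγ]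

theorem sum_sum_filter_ASub_mul_PhiSub (ha : HasFiniteSupport a)
    (hc : HasFiniteSupport (halfSamples φ)) (hm : 0 < m) (z : ℂ) :
    ∑ β ∈ range m, ∑ γ ∈ (range m).filter (fun γ => 2 * (γ + β) % m = 0),
        ASub a m β (z ^ 2) * PhiSub φ m 2 (2 * γ + 1) z =
      (2 * m : ℂ)⁻¹ * ∑ᶠ k : ℤ, (a k : ℂ) * z ^ (2 * k) * oddResidueSeries φ m k z := by
  rw [finsum_eq_sum_range_finsum_mul_add hm (by fun_prop), mul_sum]
  refine sum_congr rfl fun β _ => ?_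
  rw [← mul_sum, ASub_sq_eq_finsum, mul_assoc, finsum_mul, mul_finsum, mul_finsum]
  refine finsum_congr fun q => ?_
  rw [sum_filter_PhiSub hc hm β q]
  ring

end DualRefinement

theorem dual_interpolatory_necessary_condition_general
    (m : ℕ) (hm : 2 ≤ m)
    (a : ℤ → ℝ) (ha : (Function.support a).Finite)
    (φ : ℝ → ℝ) (hφs : HasCompactSupport φ)
    (href : ∀ x : ℝ, φ x = ∑ᶠ k : ℤ, a k * φ ((m : ℝ) * x - (k : ℝ) + 1 / 2))
    (hint : ∀ n : ℤ, φ (n : ℝ) = if n = 0 then 1 else 0) :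
    ∀ ω : ℝ, ∀ z : ℂ, z = Complex.exp (-((Real.pi : ℂ) * Complex.I * (ω : ℂ))) →
      1 / 2 + ∑ γ ∈ Finset.range m, PhiSub φ m 2 (2 * (γ : ℤ) + 1) (z ^ m) =
        (m : ℂ) * z⁻¹ *
          ((∑ β ∈ (Finset.range m).filter (fun β => (2 * β) % m = 1 % m),
              ASub a m (β : ℤ) (z ^ 2) / 2) +
           ∑ β ∈ Finset.range m,
             ∑ γ ∈ (Finset.range m).filter (fun γ => (2 * (γ + β)) % m = 0),
               ASub a m (β : ℤ) (z ^ 2) * PhiSub φ m 2 (2 * (γ : ℤ) + 1) z) := by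
  intro ω z hz
  have hz0 : z ≠ 0 := hz ▸ Complex.exp_ne_zero _
  have hm0 : 0 < m := by omega
  have hmC : (m : ℂ) ≠ 0 := by exact_mod_cast hm0.ne'
  replace ha : HasFiniteSupport a := ha
  have hc := hasFiniteSupport_halfSamples hφs
  have heven := halfSamples_two_mul hint
  rw [one_half_add_sum_PhiSub hc heven hm0,
    finsum_halfSamples_refinement hc ha (halfSamples_eq_finsum href) hm0 hz0,
    sum_filter_ASub_div_two ha hm0, sum_sum_filter_ASub_mul_PhiSub ha hc hm0]
  simp_rw [finsum_halfSamples_residue_class hc heven hm0]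
  rw [← mul_add, ← finsum_add_distrib (by fun_prop) (by fun_prop), mul_finsum, mul_finsum,
    mul_finsum]
  refine finsum_congr fun k => ?_
  rw [zpow_sub_one₀ hz0]
  field_simp

/-- Lemma 3.1: for a dual (`τ = 1/2`) interpolatory refinable `φ`,
`1/2 + Σ_γ Φ_{2,2γ+1}(z^m) = m z⁻¹ (Σ_{2β≡1 (m)} A_β(z²)/2 + Σ_{2(γ+β)≡0 (m)} A_β(z²) Φ_{2,2γ+1}(z))`
where `z = e^{-πiω}`. -/
theorem dual_interpolatory_necessary_condition
    (m : ℕ) (hm : 2 ≤ m)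
    (a : ℤ → ℝ) (ha : (Function.support a).Finite)
    (φ : ℝ → ℝ) (hφc : Continuous φ) (hφs : HasCompactSupport φ)
    (href : ∀ x : ℝ, φ x = ∑ᶠ k : ℤ, a k * φ ((m : ℝ) * x - (k : ℝ) + 1 / 2))
    (hdecay : ∃ C ε : ℝ, 0 < C ∧ 0 < ε ∧
      ∀ x : ℝ, |φ x| + ‖fourierT φ x‖ ≤ C * (1 + |x|) ^ (-1 - ε))
    (hint : ∀ n : ℤ, φ (n : ℝ) = if n = 0 then 1 else 0) :
    ∀ ω : ℝ, ∀ z : ℂ, z = Complex.exp (-((Real.pi : ℂ) * Complex.I * (ω : ℂ))) →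
      1 / 2 + ∑ γ ∈ Finset.range m, PhiSub φ m 2 (2 * (γ : ℤ) + 1) (z ^ m) =
        (m : ℂ) * z⁻¹ *
          ((∑ β ∈ (Finset.range m).filter (fun β => (2 * β) % m = 1 % m),
              ASub a m (β : ℤ) (z ^ 2) / 2) +
           ∑ β ∈ Finset.range m,
             ∑ γ ∈ (Finset.range m).filter (fun γ => (2 * (γ + β)) % m = 0),
               ASub a m (β : ℤ) (z ^ 2) * PhiSub φ m 2 (2 * (γ : ℤ) + 1) z) :=
  dual_interpolatory_necessary_condition_general m hm a ha φ hφs href hint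
end

section
/- Let λ ∈ ℕ, λ ≥ 2, and m = 2λ. Let a : ℤ → ℝ be a finitely supported mask and let φ : ℝ → ℝ be a continuous, compactly supported function satisfying φ(x) = Σ_{k∈ℤ} a_k φ(mx − k + 1/2) for all x ∈ ℝ, with |φ(x)| + |φ̂(x)| ≤ C(1 + |x|)^{−1−ε} for some C, ε > 0. Then φ(n) = δ_{0,n} for all n ∈ ℤ if and only if for every ω ∈ ℝ, writing z = e^{−πiω}, the identity 1/2 + Σ_{γ=0}^{m−1} Φ_{2,2γ+1}(z^m) = m z^{−1} Σ_{γ=0}^{m−1} ( A_{m/2−γ}(z²) + A_{m−γ}(z²) ) Φ_{2,2γ+1}(z) holds. -/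
/-!
Write `F j = φ (j + 1/2)`. Multiplying out the sub-symbols and re-indexing the pairs `(j, γ)` by
`m j + γ` turns `m z⁻¹ Σ_γ A_{c-γ}(z²) Φ_{2,2γ+1}(z)` into
`½ Σ_s (Σ_i a_{ms+c-i} F i) z^{2(ms+c)}`, and the refinement equation at `x = s + c/m` identifies
the inner sum with `φ (s + c/m)`. For `c = λ` this is `Σ_γ Φ_{2,2γ+1}(z^m) = ½ Σ_j F j z^{m(2j+1)}`,
and for `c = m` it gives the integer samples, so the identity says exactly
`Σ_n φ(n) z^{2mn} = 1`. As `ω` ranges over `ℝ`, `z^{2m}` covers the unit circle, and a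
trigonometric polynomial equal to `1` there has Fourier coefficients `δ_{0,n}`.
-/

open Function

theorem finsum_comm_of_finite {α β M : Type*} [AddCommMonoid M] {f : α → β → M}
    (hf : (support (uncurry f)).Finite) :
    ∑ᶠ a, ∑ᶠ b, f a b = ∑ᶠ b, ∑ᶠ a, f a b :=
  calc ∑ᶠ a, ∑ᶠ b, f a b = ∑ᶠ p, uncurry f p := (finsum_curry _ hf).symm
    _ = ∑ᶠ q : β × α, uncurry f q.swap := (finsum_comp_equiv (Equiv.prodComm β α)).symm
    _ = ∑ᶠ b, ∑ᶠ a, f a b :=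
      finsum_curry (fun q : β × α => uncurry f q.swap) (hf.preimage Prod.swap_injective.injOn)

theorem sum_range_finsum_mul_add {M : Type*} [AddCommMonoid M] {m : ℕ} (hm : m ≠ 0)
    {f : ℤ → M} (hf : (support f).Finite) :
    ∑ γ ∈ Finset.range m, ∑ᶠ k : ℤ, f (m * k + γ) = ∑ᶠ j, f j := by
  have : NeZero m := ⟨hm⟩
  let e := (Int.divModEquiv m).symm
  rw [← finsum_comp_equiv e, finsum_curry _ (hf.preimage e.injective.injOn), sum_finsum_comm]
  · refine finsum_congr fun k => ?_
    simp only [e, Int.divModEquiv_symm_apply, finsum_eq_sum_of_fintype, mul_comm (m : ℤ)]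
    exact (Fin.sum_univ_eq_sum_range (fun γ => f (k * m + γ)) m).symm
  · intro γ _
    exact hf.preimage fun x _ y _ h => by simpa [hm] using h

theorem HasCompactSupport.finite_support_int_add {M : Type*} [Zero M] {φ : ℝ → M}
    (hφ : HasCompactSupport φ) (d : ℝ) : (support fun j : ℤ => φ (j + d)).Finite :=
  (tendsto_cofinite_cocompact_iff.mp
    ((Homeomorph.addRight d).isClosedEmbedding.tendsto_cocompact.comp Int.tendsto_coe_cofinite)
    _ hφ).subset fun _ hj => subset_tsupport _ hj

theorem fourierCoeff_finsum_mul_fourier {T : ℝ} [Fact (0 < T)] {c : ℤ → ℂ}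
    (hc : (support c).Finite) :
    fourierCoeff (T := T) (fun x => ∑ᶠ n, c n * fourier n x) = c := by
  have hsum : (fun x => ∑ᶠ n, c n * fourier n x) =
      ∑ n ∈ hc.toFinset, fun x : AddCircle T => c n * fourier n x := by
    ext x
    rw [finsum_eq_sum_of_support_subset _ (s := hc.toFinset)]
    · simp [Finset.sum_apply]
    · intro n hn
      simpa using left_ne_zero_of_mul hn
  rw [hsum, fourierCoeff.sum hc.toFinset (fun n x => c n * fourier n x) fun n _ =>
    (continuous_const.mul (fourier n).continuous).integrable_of_hasCompactSupport
      (.of_compactSpace _)]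
  ext k
  simp only [Finset.sum_apply, fourierCoeff.const_mul, fourierCoeff_fourier, Pi.single_apply,
    mul_ite, mul_one, mul_zero, Finset.sum_ite_eq, Set.Finite.mem_toFinset, mem_support]
  exact ite_eq_left_iff.mpr fun h => (not_not.mp h).symm

theorem eq_single_zero_of_finsum_mul_fourier_eq_one {T : ℝ} [Fact (0 < T)] {c : ℤ → ℂ}
    (hc : (support c).Finite) (h : ∀ x : AddCircle T, ∑ᶠ n, c n * fourier n x = 1) :
    c = Pi.single 0 1 := by
  rw [← fourierCoeff_finsum_mul_fourier (T := T) hc, funext h, ← fourierCoeff_fourier (T := T) 0]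
  congr
  ext
  simp

theorem PhiSub_two_two_mul_add_one (φ : ℝ → ℝ) (m : ℕ) (γ : ℤ) (z : ℂ) :
    PhiSub φ m 2 (2 * γ + 1) z =
      2⁻¹ * ∑ᶠ k : ℤ, (φ ((m * k + γ : ℤ) + 1 / 2) : ℂ) * z ^ (2 * (m * k + γ) + 1) := by
  unfold PhiSub
  push_cast
  congr 1
  refine finsum_congr fun k => ?_
  congr 1
  · congr 2; ring
  · congr 1; ring

theorem ASub_sq (a : ℤ → ℝ) (m : ℕ) (n : ℤ) (z : ℂ) :
    ASub a m n (z ^ 2) = (m : ℂ)⁻¹ * ∑ᶠ k : ℤ, (a (m * k + n) : ℂ) * z ^ (2 * (m * k + n)) := by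
  simp only [ASub, ← zpow_natCast, ← zpow_mul]
  rfl

theorem sum_range_PhiSub_two_pow {φ : ℝ → ℝ} (hφ : HasCompactSupport φ) {m : ℕ} (hm : m ≠ 0)
    (z : ℂ) :
    ∑ γ ∈ Finset.range m, PhiSub φ m 2 (2 * γ + 1) (z ^ m) =
      2⁻¹ * ∑ᶠ j : ℤ, (φ (j + 1 / 2) : ℂ) * z ^ (m * (2 * j + 1)) := by
  have hF := (hφ.comp_left Complex.ofReal_zero).finite_support_int_add (1 / 2)
  simp_rw [PhiSub_two_two_mul_add_one, ← Finset.mul_sum, ← zpow_natCast, ← zpow_mul]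
  rw [← sum_range_finsum_mul_add hm (hF.subset (support_mul_subset_left _ _))]

theorem ASub_mul_PhiSub (a : ℤ → ℝ) (φ : ℝ → ℝ) (m : ℕ) {z : ℂ} (hz : z ≠ 0) (c γ : ℤ) :
    ASub a m (c - γ) (z ^ 2) * PhiSub φ m 2 (2 * γ + 1) z =
      (2 * m : ℂ)⁻¹ * ∑ᶠ j : ℤ, (φ ((m * j + γ : ℤ) + 1 / 2) : ℂ) *
        ∑ᶠ s : ℤ, (a (m * s + c - (m * j + γ)) : ℂ) * z ^ (2 * (m * s + c) + 1) := by
  rw [ASub_sq, PhiSub_two_two_mul_add_one, mul_mul_mul_comm, ← mul_inv, mul_comm (m : ℂ),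
    mul_finsum]
  simp_rw [finsum_mul]
  congr 1
  refine finsum_congr fun j => ?_
  rw [← finsum_comp_equiv (Equiv.subRight j), mul_finsum]
  refine finsum_congr fun s => ?_
  simp only [Equiv.subRight_apply]
  have hindex : (m * (s - j) + (c - γ) : ℤ) = m * s + c - (m * j + γ) := by ring
  have hpow : z ^ (2 * (m * s + c - (m * j + γ))) * z ^ (2 * (m * j + γ) + 1) =
      z ^ (2 * (m * s + c) + 1) := by
    rw [← zpow_add₀ hz]; ring_nf
  rw [hindex, ← hpow]
  ring

theorem mul_sum_ASub_mul_PhiSub {a : ℤ → ℝ} (ha : (support a).Finite) {φ : ℝ → ℝ}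
    (hφ : HasCompactSupport φ) {m : ℕ} (hm : m ≠ 0) {z : ℂ} (hz : z ≠ 0) (c : ℤ) :
    m * z⁻¹ * ∑ γ ∈ Finset.range m, ASub a m (c - γ) (z ^ 2) * PhiSub φ m 2 (2 * γ + 1) z =
      2⁻¹ * ∑ᶠ s : ℤ, (∑ᶠ i : ℤ, (a (m * s + c - i) : ℂ) * φ (i + 1 / 2)) *
        z ^ (2 * (m * s + c)) := by
  have hF := (hφ.comp_left Complex.ofReal_zero).finite_support_int_add (1 / 2)
  simp_rw [ASub_mul_PhiSub a φ m hz, ← Finset.mul_sum]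
  rw [sum_range_finsum_mul_add hm (f := fun i : ℤ => (φ (i + 1 / 2) : ℂ) *
    ∑ᶠ s : ℤ, (a (m * s + c - i) : ℂ) * z ^ (2 * (m * s + c) + 1))
    (hF.subset (support_mul_subset_left _ _)), finsum_congr fun i => mul_finsum _ _,
    finsum_comm_of_finite]
  · have hterm : ∀ s : ℤ, ∑ᶠ i : ℤ, (φ (i + 1 / 2) : ℂ) *
        ((a (m * s + c - i) : ℂ) * z ^ (2 * (m * s + c) + 1)) =
        z * ((∑ᶠ i : ℤ, (a (m * s + c - i) : ℂ) * φ (i + 1 / 2)) * z ^ (2 * (m * s + c))) := by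
      intro s
      rw [finsum_mul, mul_finsum]
      refine finsum_congr fun i => ?_
      rw [zpow_add_one₀ hz]
      ring
    simp_rw [hterm, ← mul_finsum]
    generalize (∑ᶠ s : ℤ, _ : ℂ) = X
    field_simp
  · refine ((hF.prod ha).preimage (f := fun p : ℤ × ℤ => (p.1, m * p.2 + c - p.1))
      fun p _ q _ h => ?_).subset fun p hp => ?_
    · obtain ⟨h1, h2⟩ := Prod.mk.inj h
      rw [h1, sub_left_inj, add_left_inj] at h2
      exact Prod.ext h1 (mul_left_cancel₀ (by exact_mod_cast hm) h2)
    · exact ⟨by simpa using left_ne_zero_of_mul hp,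
        by simpa using left_ne_zero_of_mul (right_ne_zero_of_mul hp)⟩

theorem finsum_mask_mul_half_samples_eq {a : ℤ → ℝ} {φ : ℝ → ℝ} {m : ℕ} (hm : m ≠ 0)
    (href : ∀ x : ℝ, φ x = ∑ᶠ k : ℤ, a k * φ ((m : ℝ) * x - (k : ℝ) + 1 / 2)) (n : ℤ) :
    ∑ᶠ i : ℤ, (a (n - i) : ℂ) * φ (i + 1 / 2) = φ (n / m) := by
  have hcast := (Complex.ofRealHom : ℝ →+ ℂ).map_finsum_of_injective Complex.ofReal_injective
    fun k => a k * φ (n - k + 1 / 2)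
  simp only [AddMonoidHom.coe_coe, Complex.ofRealHom_eq_coe, Complex.ofReal_mul] at hcast
  rw [href, mul_div_cancel₀ _ (by exact_mod_cast hm), hcast,
    ← finsum_comp_equiv (Equiv.subLeft n)]
  simp

theorem dual_identity_iff_finsum_samples_eq_one {lam m : ℕ} (hm : m = 2 * lam) (hlam : lam ≠ 0)
    {a : ℤ → ℝ} (ha : (support a).Finite) {φ : ℝ → ℝ} (hφ : HasCompactSupport φ)
    (href : ∀ x : ℝ, φ x = ∑ᶠ k : ℤ, a k * φ ((m : ℝ) * x - (k : ℝ) + 1 / 2)) {z : ℂ}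
    (hz : z ≠ 0) :
    1 / 2 + ∑ γ ∈ Finset.range m, PhiSub φ m 2 (2 * γ + 1) (z ^ m) =
        m * z⁻¹ * ∑ γ ∈ Finset.range m,
          (ASub a m (lam - γ) (z ^ 2) + ASub a m (m - γ) (z ^ 2)) * PhiSub φ m 2 (2 * γ + 1) z ↔
      ∑ᶠ n : ℤ, (φ n : ℂ) * z ^ (2 * m * n) = 1 := by
  have hm0 : m ≠ 0 := by omega
  have hhalf : ∑ᶠ s : ℤ, (∑ᶠ i : ℤ, (a (m * s + lam - i) : ℂ) * φ (i + 1 / 2)) *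
      z ^ (2 * (m * s + lam)) = ∑ᶠ j : ℤ, (φ (j + 1 / 2) : ℂ) * z ^ (m * (2 * j + 1)) := by
    refine finsum_congr fun s => ?_
    have harg : ((m * s + lam : ℤ) : ℝ) / m = s + 1 / 2 := by
      field_simp
      rw [hm]; push_cast; ring
    have hexp : 2 * (m * s + lam : ℤ) = m * (2 * s + 1) := by rw [hm]; push_cast; ring
    rw [finsum_mask_mul_half_samples_eq hm0 href, harg, hexp]
  have hint : ∑ᶠ s : ℤ, (∑ᶠ i : ℤ, (a (m * s + m - i) : ℂ) * φ (i + 1 / 2)) *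
      z ^ (2 * (m * s + m)) = ∑ᶠ n : ℤ, (φ n : ℂ) * z ^ (2 * m * n) := by
    rw [← finsum_comp_equiv (Equiv.addRight 1) (f := fun n : ℤ => (φ n : ℂ) * z ^ (2 * m * n))]
    refine finsum_congr fun s => ?_
    have harg : ((m * s + m : ℤ) : ℝ) / m = ((s + 1 : ℤ) : ℝ) := by
      field_simp
      push_cast; ring
    rw [finsum_mask_mul_half_samples_eq hm0 href, harg, Equiv.coe_addRight]
    ring_nf
  simp only [add_mul, Finset.sum_add_distrib, mul_add]
  rw [sum_range_PhiSub_two_pow hφ hm0, mul_sum_ASub_mul_PhiSub ha hφ hm0 hz,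
    mul_sum_ASub_mul_PhiSub ha hφ hm0 hz, hhalf, hint]
  constructor <;> intro h
  · linear_combination (-2 : ℂ) * h
  · linear_combination (-2⁻¹ : ℂ) * h

theorem dual_interpolatory_characterization_even_general
    (lam : ℕ) (hlam : 2 ≤ lam) (m : ℕ) (hm : m = 2 * lam)
    (a : ℤ → ℝ) (ha : (Function.support a).Finite)
    (φ : ℝ → ℝ) (hφs : HasCompactSupport φ)
    (href : ∀ x : ℝ, φ x = ∑ᶠ k : ℤ, a k * φ ((m : ℝ) * x - (k : ℝ) + 1 / 2)) :
    (∀ n : ℤ, φ (n : ℝ) = if n = 0 then 1 else 0) ↔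
      (∀ ω : ℝ, ∀ z : ℂ, z = Complex.exp (-((Real.pi : ℂ) * Complex.I * (ω : ℂ))) →
        1 / 2 + ∑ γ ∈ Finset.range m, PhiSub φ m 2 (2 * (γ : ℤ) + 1) (z ^ m) =
          (m : ℂ) * z⁻¹ *
            ∑ γ ∈ Finset.range m,
              (ASub a m ((lam : ℤ) - (γ : ℤ)) (z ^ 2) + ASub a m ((m : ℤ) - (γ : ℤ)) (z ^ 2)) *
                PhiSub φ m 2 (2 * (γ : ℤ) + 1) z) := by
  have hlam0 : lam ≠ 0 := by omega
  have hsamples : (support fun n : ℤ => (φ n : ℂ)).Finite := by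
    simpa using (hφs.comp_left Complex.ofReal_zero).finite_support_int_add 0
  constructor
  · rintro hinterp ω z rfl
    rw [dual_identity_iff_finsum_samples_eq_one hm hlam0 ha hφs href (Complex.exp_ne_zero _),
      finsum_eq_single _ 0 fun n hn => by simp [hinterp n, hn]]
    simpa using hinterp 0
  · intro hdual n
    have hcoeff := eq_single_zero_of_finsum_mul_fourier_eq_one (T := 1) hsamples fun x => ?_
    · have := congrFun hcoeff n
      split_ifs with h <;> simpa [h] using this
    · induction x using QuotientAddGroup.induction_on with | H t => ?_
      -- `ω = -t/m` makes `z ^ (2 * m) = exp (2πit)`, so the point `t` of the circle is reached.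
      have hdual_t := (dual_identity_iff_finsum_samples_eq_one hm hlam0 ha hφs href
        (Complex.exp_ne_zero _)).mp (hdual (-t / m) _ rfl)
      rw [← hdual_t]
      refine finsum_congr fun n => ?_
      rw [fourier_coe_apply, ← Complex.exp_int_mul]
      have hmC : (m : ℂ) ≠ 0 := by exact_mod_cast (show m ≠ 0 by omega)
      congr 2
      push_cast
      field_simp

/-- Theorem 3.2, even arity `m = 2λ ≥ 4`: `φ` is interpolatory iff
`1/2 + Σ_γ Φ_{2,2γ+1}(z^m) = m z⁻¹ Σ_γ (A_{m/2-γ}(z²) + A_{m-γ}(z²)) Φ_{2,2γ+1}(z)`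
for all `ω ∈ ℝ`, `z = e^{-πiω}`.  Here `m/2 = λ`. -/
theorem dual_interpolatory_characterization_even
    (lam : ℕ) (hlam : 2 ≤ lam) (m : ℕ) (hm : m = 2 * lam)
    (a : ℤ → ℝ) (ha : (Function.support a).Finite)
    (φ : ℝ → ℝ) (hφc : Continuous φ) (hφs : HasCompactSupport φ)
    (href : ∀ x : ℝ, φ x = ∑ᶠ k : ℤ, a k * φ ((m : ℝ) * x - (k : ℝ) + 1 / 2))
    (hdecay : ∃ C ε : ℝ, 0 < C ∧ 0 < ε ∧
      ∀ x : ℝ, |φ x| + ‖fourierT φ x‖ ≤ C * (1 + |x|) ^ (-1 - ε)) :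
    (∀ n : ℤ, φ (n : ℝ) = if n = 0 then 1 else 0) ↔
      (∀ ω : ℝ, ∀ z : ℂ, z = Complex.exp (-((Real.pi : ℂ) * Complex.I * (ω : ℂ))) →
        1 / 2 + ∑ γ ∈ Finset.range m, PhiSub φ m 2 (2 * (γ : ℤ) + 1) (z ^ m) =
          (m : ℂ) * z⁻¹ *
            ∑ γ ∈ Finset.range m,
              (ASub a m ((lam : ℤ) - (γ : ℤ)) (z ^ 2) + ASub a m ((m : ℤ) - (γ : ℤ)) (z ^ 2)) *
                PhiSub φ m 2 (2 * (γ : ℤ) + 1) z) :=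
  dual_interpolatory_characterization_even_general lam hlam m hm a ha φ hφs href
end
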